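/- Define, for β ∈ ℝ, ϱ₄(β) = (42β³ + 27β)·arccos(β) − (65β² + 4)√(1 − β²), ϱ₅(β) = (10β² + 1)·arccos(β) − 11β√(1 − β²), and ϱ₆(β) = 3β·arccos(β) − √(1 − β²). Then for every β with −1 < β < 0 one has 6·ϱ₅(β)² − 4·ϱ₄(β)·ϱ₆(β) < 0. -/
import Mathlib

open Real

/-- Auxiliary function `ϱ₄`. -/
noncomputable def rho4 (β : ℝ) : ℝ :=
  (42*β^3 + 27*β) * Real.arccos β - (65*β^2 + 4) * Real.sqrt (1 - β^2)

/-- Auxiliary function `ϱ₅`. -/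
noncomputable def rho5 (β : ℝ) : ℝ :=
  (10*β^2 + 1) * Real.arccos β - 11*β*Real.sqrt (1 - β^2)

/-- Auxiliary function `ϱ₆`. -/
noncomputable def rho6 (β : ℝ) : ℝ :=
  3*β*Real.arccos β - Real.sqrt (1 - β^2)

private lemma arcsin_le_self_of_neg' {β : ℝ} (h₁ : -1 < β) (h₂ : β < 0) :
    Real.arcsin β ≤ β := by
  have hβ : Real.sin (Real.arcsin β) = β := Real.sin_arcsin (by linarith) (by linarith)
  have ht : Real.arcsin β < 0 := Real.arcsin_lt_zero.2 h₂
  have := Real.sin_lt (x := -Real.arcsin β) (by linarith)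
  rw [Real.sin_neg, hβ] at this
  linarith

private lemma mul_le_arcsin_of_neg' {β : ℝ} (h₁ : -1 < β) (h₂ : β < 0) :
    π/2 * β ≤ Real.arcsin β := by
  have hβ : Real.sin (Real.arcsin β) = β := Real.sin_arcsin (by linarith) (by linarith)
  have ht : Real.arcsin β < 0 := Real.arcsin_lt_zero.2 h₂
  have hge : -(π/2) ≤ Real.arcsin β := Real.neg_pi_div_two_le_arcsin β
  have h := Real.mul_le_sin (x := -Real.arcsin β) (by linarith) (by linarith)
  rw [Real.sin_neg, hβ] at h
  rw [div_mul_eq_mul_div, div_le_iff₀ Real.pi_pos] at h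
  nlinarith [Real.pi_pos]


private lemma uni_DL1a {β : ℝ} (h₁ : -1 < β) (h₂ : β < 0) :
    6*(16*β^4-34*β^2+1)*(1.5707965-β)^2 + (-12*β*(31*β^2-2)*(1-β^2))*(1.570796-β)
      + 2*(233*β^2-8)*(1-β^2) < -1 := by
  nlinarith [sq_nonneg β, sq_nonneg (β^2), mul_nonneg (neg_nonneg.2 h₂.le) (sq_nonneg β),
    mul_nonneg (mul_nonneg (neg_nonneg.2 h₂.le) (neg_nonneg.2 h₂.le)) (sq_nonneg β),
    mul_nonneg (neg_nonneg.2 h₂.le) (sq_nonneg (β^2)), sq_nonneg (β^2+β),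
    mul_nonneg (neg_nonneg.2 h₂.le) (sq_nonneg (β^2))]

private lemma uni_DL1b {β : ℝ} (h₁ : -1 < β) (h₂ : β < 0) :
    6*(16*β^4-34*β^2+1)*(1.570796-β)^2 + (-12*β*(31*β^2-2)*(1-β^2))*(1.570796-β)
      + 2*(233*β^2-8)*(1-β^2) < -1 := by
  nlinarith [sq_nonneg β, sq_nonneg (β^2), mul_nonneg (neg_nonneg.2 h₂.le) (sq_nonneg β),
    mul_nonneg (mul_nonneg (neg_nonneg.2 h₂.le) (neg_nonneg.2 h₂.le)) (sq_nonneg β),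
    mul_nonneg (neg_nonneg.2 h₂.le) (sq_nonneg (β^2))]

private lemma uni_DL2 {β : ℝ} (h₁ : -1 < β) (h₂ : β < 0) :
    6*(16*β^4-34*β^2+1)*(1.570796-β)^2 + (-12*β*(31*β^2-2)*(1-β^2/2))*(1.5707965-β)
      + 2*(233*β^2-8)*(1-β^2) < -1 := by
  nlinarith [sq_nonneg β, sq_nonneg (β^2), mul_nonneg (neg_nonneg.2 h₂.le) (sq_nonneg β),
    mul_nonneg (mul_nonneg (neg_nonneg.2 h₂.le) (neg_nonneg.2 h₂.le)) (sq_nonneg β),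
    mul_nonneg (neg_nonneg.2 h₂.le) (sq_nonneg (β^2)),
    mul_nonneg (mul_nonneg (neg_nonneg.2 h₂.le) (neg_nonneg.2 h₂.le)) (sq_nonneg (β+1))]

private lemma uni_DU1a {β : ℝ} (h₁ : -1 < β) (h₂ : β < 0) :
    6*(16*β^4-34*β^2+1)*(1.5707965*(1-β))^2 + (-12*β*(31*β^2-2)*(1-β^2))*(1.570796*(1-β))
      + 2*(233*β^2-8)*(1-β^2) < -1 := by
  nlinarith [sq_nonneg β, sq_nonneg (β^2), mul_nonneg (neg_nonneg.2 h₂.le) (sq_nonneg β),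
    mul_nonneg (mul_nonneg (neg_nonneg.2 h₂.le) (neg_nonneg.2 h₂.le)) (sq_nonneg β),
    mul_nonneg (neg_nonneg.2 h₂.le) (sq_nonneg (β^2))]

private lemma uni_Sl1 {β : ℝ} (h₁ : -1 < β) (h₂ : β < 0) (hc : 31*β^2 - 2 ≤ 0)
    (ha : 16*β^4-34*β^2+1 ≤ 0) :
    2*(6*(16*β^4-34*β^2+1))*(1.570796-β) + (-12*β*(31*β^2-2))*(1-β^2) < 0 := by
  nlinarith [sq_nonneg β, sq_nonneg (β^2), mul_nonneg (neg_nonneg.2 h₂.le) (sq_nonneg β),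
    mul_nonneg (neg_nonneg.2 h₂.le) (sq_nonneg (β^2))]

private lemma uni_Sl2 {β : ℝ} (h₁ : -1 < β) (h₂ : β < 0) (hc : 0 ≤ 31*β^2 - 2)
    (ha : 16*β^4-34*β^2+1 ≤ 0) :
    2*(6*(16*β^4-34*β^2+1))*(1.570796-β) + (-12*β*(31*β^2-2))*(1-β^2/2) < 0 := by
  nlinarith [sq_nonneg β, sq_nonneg (β^2), mul_nonneg (neg_nonneg.2 h₂.le) (sq_nonneg β),
    mul_nonneg (neg_nonneg.2 h₂.le) (sq_nonneg (β^2)),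
    mul_nonneg (mul_nonneg (neg_nonneg.2 h₂.le) (neg_nonneg.2 h₂.le)) (sq_nonneg (β+1))]

set_option maxHeartbeats 1600000 in
private lemma key_quadratic {β S A : ℝ} (h₁ : -1 < β) (h₂ : β < 0)
    (hS : S^2 = 1 - β^2) (hS0 : 0 < S)
    (hA1 : π/2 - β ≤ A) (hA2 : A ≤ π/2 - π/2*β) :
    6*(16*β^4-34*β^2+1)*A^2 - 12*β*(31*β^2-2)*S*A + 2*(233*β^2-8)*S^2 < 0 := by
  have hp1 : 3.141592 < π := Real.pi_gt_d6
  have hp2 : π < 3.141593 := Real.pi_lt_d6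
  have hS1 : S ≤ 1 := by nlinarith
  have hSlow : 1 - β^2 ≤ S := by nlinarith
  have hShigh : S ≤ 1 - β^2/2 := by nlinarith [sq_nonneg (β^2)]
  obtain ⟨L, hLdef⟩ : ∃ L : ℝ, L = π/2 - β := ⟨_, rfl⟩
  obtain ⟨U, hUdef⟩ : ∃ U : ℝ, U = π/2 - π/2*β := ⟨_, rfl⟩
  rw [← hLdef] at hA1
  rw [← hUdef] at hA2
  have hL1 : 1.570796 - β ≤ L := by rw [hLdef]; linarith
  have hL2 : L ≤ 1.5707965 - β := by rw [hLdef]; linarith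
  have hLpos : (0:ℝ) < L := by linarith
  have hU1 : 1.570796*(1-β) ≤ U := by rw [hUdef]; nlinarith
  have hU2 : U ≤ 1.5707965*(1-β) := by rw [hUdef]; nlinarith
  have hUpos : (0:ℝ) < U := by nlinarith
  have hb2 : β^2 ≤ 1 := by nlinarith
  have h1mb2 : (0:ℝ) ≤ 1 - β^2 := by linarith
  have hr : 2*(233*β^2-8)*S^2 = 2*(233*β^2-8)*(1-β^2) := by rw [hS]
  -- D at the lower bound L is less than -1
  have hDL : 6*(16*β^4-34*β^2+1)*L^2 - 12*β*(31*β^2-2)*S*L + 2*(233*β^2-8)*S^2 < -1 := by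
    rcases le_or_gt (31*β^2-2) 0 with hc | hc
    · have hk : 0 ≤ 12*β*(31*β^2-2) := by
        nlinarith [mul_nonneg (by linarith : (0:ℝ) ≤ -(12*β)) (by linarith : (0:ℝ) ≤ -(31*β^2-2))]
      have hq : -12*β*(31*β^2-2)*S*L ≤ (-12*β*(31*β^2-2)*(1-β^2))*(1.570796-β) := by
        nlinarith [mul_nonneg (mul_nonneg hk hLpos.le) (sub_nonneg.2 hSlow),
          mul_nonneg (mul_nonneg hk h1mb2) (sub_nonneg.2 hL1)]
      rcases le_or_gt 0 (16*β^4-34*β^2+1) with ha | ha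
      · have hL2sq : 6*(16*β^4-34*β^2+1)*L^2 ≤ 6*(16*β^4-34*β^2+1)*(1.5707965-β)^2 := by
          nlinarith [mul_nonneg ha (mul_nonneg (sub_nonneg.2 hL2) (by linarith : (0:ℝ) ≤ L + (1.5707965-β)))]
        have huni := uni_DL1a h₁ h₂
        linarith
      · have hL1sq : 6*(16*β^4-34*β^2+1)*L^2 ≤ 6*(16*β^4-34*β^2+1)*(1.570796-β)^2 := by
          nlinarith [mul_nonneg (neg_nonneg.2 ha.le) (mul_nonneg (sub_nonneg.2 hL1) (by linarith : (0:ℝ) ≤ L + (1.570796-β)))]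
        have huni := uni_DL1b h₁ h₂
        linarith
    · have hk : 0 ≤ -12*β*(31*β^2-2) := mul_nonneg (by linarith) hc.le
      have ha : 16*β^4-34*β^2+1 ≤ 0 := by nlinarith [sq_nonneg (β^2)]
      have hq : -12*β*(31*β^2-2)*S*L ≤ (-12*β*(31*β^2-2)*(1-β^2/2))*(1.5707965-β) := by
        nlinarith [mul_nonneg (mul_nonneg hk hLpos.le) (sub_nonneg.2 hShigh),
          mul_nonneg (mul_nonneg hk (by nlinarith : (0:ℝ) ≤ 1-β^2/2)) (sub_nonneg.2 hL2)]
      have hL1sq : 6*(16*β^4-34*β^2+1)*L^2 ≤ 6*(16*β^4-34*β^2+1)*(1.570796-β)^2 := by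
        nlinarith [mul_nonneg (neg_nonneg.2 ha) (mul_nonneg (sub_nonneg.2 hL1) (by linarith : (0:ℝ) ≤ L + (1.570796-β)))]
      have huni := uni_DL2 h₁ h₂
      linarith
  have hAL : 0 ≤ A - L := by linarith
  rcases le_or_gt 0 (16*β^4-34*β^2+1) with hp | hp
  · -- convex case
    have hDU : 6*(16*β^4-34*β^2+1)*U^2 - 12*β*(31*β^2-2)*S*U + 2*(233*β^2-8)*S^2 < -1 := by
      rcases le_or_gt (31*β^2-2) 0 with hc | hc
      · have hk : 0 ≤ 12*β*(31*β^2-2) := by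
          nlinarith [mul_nonneg (by linarith : (0:ℝ) ≤ -(12*β)) (by linarith : (0:ℝ) ≤ -(31*β^2-2))]
        have hq : -12*β*(31*β^2-2)*S*U ≤ (-12*β*(31*β^2-2)*(1-β^2))*(1.570796*(1-β)) := by
          nlinarith [mul_nonneg (mul_nonneg hk hUpos.le) (sub_nonneg.2 hSlow),
            mul_nonneg (mul_nonneg hk h1mb2) (sub_nonneg.2 hU1)]
        have hU2sq : 6*(16*β^4-34*β^2+1)*U^2 ≤ 6*(16*β^4-34*β^2+1)*(1.5707965*(1-β))^2 := by
          nlinarith [mul_nonneg hp (mul_nonneg (sub_nonneg.2 hU2) (by linarith : (0:ℝ) ≤ U + 1.5707965*(1-β)))]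
        have huni := uni_DU1a h₁ h₂
        linarith
      · exfalso; nlinarith [sq_nonneg (β^2)]
    have hUA : 0 ≤ U - A := by linarith
    have hUL : 0 < U - L := by nlinarith
    have f1 : 0 ≤ 6*(16*β^4-34*β^2+1)*((A-L)*((U-A)*(U-L))) :=
      mul_nonneg (by linarith) (mul_nonneg hAL (mul_nonneg hUA hUL.le))
    have f2 : (U-A)*(6*(16*β^4-34*β^2+1)*L^2 - 12*β*(31*β^2-2)*S*L + 2*(233*β^2-8)*S^2) ≤ (U-A)*(-1) :=
      mul_le_mul_of_nonneg_left hDL.le hUA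
    have f3 : (A-L)*(6*(16*β^4-34*β^2+1)*U^2 - 12*β*(31*β^2-2)*S*U + 2*(233*β^2-8)*S^2) ≤ (A-L)*(-1) :=
      mul_le_mul_of_nonneg_left hDU.le hAL
    nlinarith [f1, f2, f3, hUL]
  · -- concave case
    have hSlope : 2*(6*(16*β^4-34*β^2+1))*L + (-12*β*(31*β^2-2))*S < 0 := by
      have h2L : 2*(6*(16*β^4-34*β^2+1))*L ≤ 2*(6*(16*β^4-34*β^2+1))*(1.570796-β) := by
        nlinarith [mul_nonneg (by linarith : (0:ℝ) ≤ -(16*β^4-34*β^2+1)) (sub_nonneg.2 hL1)]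
      rcases le_or_gt (31*β^2-2) 0 with hc | hc
      · have hk : 0 ≤ 12*β*(31*β^2-2) := by
          nlinarith [mul_nonneg (by linarith : (0:ℝ) ≤ -(12*β)) (by linarith : (0:ℝ) ≤ -(31*β^2-2))]
        have hqS : (-12*β*(31*β^2-2))*S ≤ (-12*β*(31*β^2-2))*(1-β^2) := by
          nlinarith [mul_nonneg hk (sub_nonneg.2 hSlow)]
        have huni := uni_Sl1 h₁ h₂ hc hp.le
        linarith
      · have hk : 0 ≤ -12*β*(31*β^2-2) := mul_nonneg (by linarith) hc.le
        have hqS : (-12*β*(31*β^2-2))*S ≤ (-12*β*(31*β^2-2))*(1-β^2/2) := by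
          nlinarith [mul_nonneg hk (sub_nonneg.2 hShigh)]
        have huni := uni_Sl2 h₁ h₂ hc.le hp.le
        linarith
    have g1 : 0 ≤ (A-L)*(-(2*(6*(16*β^4-34*β^2+1))*L + (-12*β*(31*β^2-2))*S)) :=
      mul_nonneg hAL (by linarith)
    have g2 : 0 ≤ (-(16*β^4-34*β^2+1))*((A-L)*(A-L)) :=
      mul_nonneg (by linarith) (mul_self_nonneg _)
    nlinarith [g1, g2, hDL]

/-- Negativity of the (rescaled) discriminant `6ϱ₅² − 4ϱ₄ϱ₆` on `(−1, 0)`. -/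
theorem stmt_18 (β : ℝ) (h₁ : -1 < β) (h₂ : β < 0) :
    6 * (rho5 β)^2 - 4 * (rho4 β) * (rho6 β) < 0 := by
  have hb2 : 1 - β^2 > 0 := by nlinarith
  have hS : (Real.sqrt (1 - β^2))^2 = 1 - β^2 := Real.sq_sqrt hb2.le
  have hS0 : 0 < Real.sqrt (1 - β^2) := Real.sqrt_pos.2 hb2
  have hA : Real.arccos β = π/2 - Real.arcsin β := Real.arccos_eq_pi_div_two_sub_arcsin β
  have hA1 : π/2 - β ≤ Real.arccos β := by
    have := arcsin_le_self_of_neg' h₁ h₂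
    rw [hA]; linarith
  have hA2 : Real.arccos β ≤ π/2 - π/2*β := by
    have := mul_le_arcsin_of_neg' h₁ h₂
    rw [hA]; linarith
  have hkey := key_quadratic h₁ h₂ hS hS0 hA1 hA2
  have heq : 6 * (rho5 β)^2 - 4 * (rho4 β) * (rho6 β)
      = 6*(16*β^4-34*β^2+1)*(Real.arccos β)^2
        - 12*β*(31*β^2-2)*(Real.sqrt (1 - β^2))*(Real.arccos β)
        + 2*(233*β^2-8)*(Real.sqrt (1 - β^2))^2 := by
    simp only [rho4, rho5, rho6]; ring
  rw [heq]
  exact hkey
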